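/- Let $n \ge 3$, $1 \le k < n-2$. Then there exists a constant $C > 0$ such that for all $z \in \mathbb{R}^{n-k}$, $$\int_{\{\tilde{y} \in \mathbb{R}^k, |\tilde{z}| \le 1\}} \frac{d\tilde{y}\, d\tilde{z}}{\left(|y-\tilde{y}|^2 + |z - \tilde{z}|^2\right)^{(n-2)/2}} \ge \frac{C}{(1+|z|)^{n-2-k}}$$ for every $y \in \mathbb{R}^k$. -/

import Mathlib

open Real MeasureTheory Metric Set Module

/-! Write `a = ‖y - ỹ‖`, `b = ‖z - z̃‖` and `γ = n - 2`. The kernel `(a² + b²) ^ (-γ/2)` is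
integrable on `ℝᵏ × B(0, 1)`: splitting `γ = α + β` with `α < k` and `β < n - k`, the bound
`(a² + b²) ^ (γ/2) ≥ a ^ α * b ^ β` tames the singularity, and `(a² + b²) ^ (γ/2) ≥ a ^ γ` with
`γ > k` gives decay as `ỹ → ∞`. Being positive, the integral is at least the integral over
`B(y, R) × B(0, 1)` with `R = 1 + ‖z‖`, where the kernel is at least `(2R²) ^ (-γ/2)` and which
has volume of order `Rᵏ`. -/

theorem mul_rpow_le_sq_add_sq_rpow {a b α β : ℝ} (ha : 0 ≤ a) (hb : 0 ≤ b) (hα : 0 ≤ α)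
    (hβ : 0 ≤ β) : a ^ α * b ^ β ≤ (a ^ 2 + b ^ 2) ^ ((α + β) / 2) := by
  have hsq : ∀ {c : ℝ}, 0 ≤ c → ∀ δ : ℝ, c ^ δ = (c ^ 2) ^ (δ / 2) := fun hc δ => by
    rw [← rpow_natCast, ← rpow_mul hc]; ring_nf
  rw [hsq ha, hsq hb, add_div, rpow_add_of_nonneg (by positivity) (by positivity) (by positivity)]
  gcongr
  · linarith [sq_nonneg b]
  · linarith [sq_nonneg a]

theorem one_div_sq_add_sq_rpow_le {a b D α β γ : ℝ} (ha : 0 < a) (hb : 0 < b) (hbD : b ≤ D)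
    (hD : 1 ≤ D) (hα : 0 ≤ α) (hβ : 0 ≤ β) (hγ : α + β = γ) :
    1 / (a ^ 2 + b ^ 2) ^ (γ / 2) ≤ D ^ β * (min (a ^ (-α)) (a ^ (-γ)) * b ^ (-β)) := by
  have hDb : 1 ≤ D ^ β * b ^ (-β) := by
    rw [rpow_neg hb.le, ← div_eq_mul_inv, ← div_rpow (by linarith) hb.le]
    exact one_le_rpow ((one_le_div hb).2 hbD) hβ
  rw [min_mul_of_nonneg _ _ (by positivity), mul_min_of_nonneg _ _ (by positivity)]
  refine le_min ?_ ?_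
  · calc 1 / (a ^ 2 + b ^ 2) ^ (γ / 2) ≤ 1 / (a ^ α * b ^ β) := by
          gcongr
          rw [← hγ]
          exact mul_rpow_le_sq_add_sq_rpow ha.le hb.le hα hβ
      _ = a ^ (-α) * b ^ (-β) := by rw [rpow_neg ha.le, rpow_neg hb.le, one_div, mul_inv]
      _ ≤ D ^ β * (a ^ (-α) * b ^ (-β)) := by
          refine le_mul_of_one_le_left (by positivity) (one_le_rpow hD hβ)
  · calc 1 / (a ^ 2 + b ^ 2) ^ (γ / 2) ≤ 1 / (a ^ 2) ^ (γ / 2) := by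
          gcongr
          · linarith
          · linarith [sq_nonneg b]
      _ = a ^ (-γ) := by
          rw [← rpow_natCast, ← rpow_mul ha.le, rpow_neg ha.le, one_div]; ring_nf
      _ ≤ D ^ β * (a ^ (-γ) * b ^ (-β)) := by
          rw [mul_left_comm]
          exact le_mul_of_one_le_right (by positivity) hDb

section

variable {E : Type*} [NormedAddCommGroup E] [NormedSpace ℝ E] [FiniteDimensional ℝ E]
  [MeasurableSpace E] [BorelSpace E] [Nontrivial E] {μ : Measure E} [μ.IsAddHaarMeasure]

theorem integrable_min_norm_rpow_neg {α γ : ℝ} (hα : α < finrank ℝ E) (hγ : finrank ℝ E < γ) :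
    Integrable (fun x : E => min (‖x‖ ^ (-α)) (‖x‖ ^ (-γ))) μ := by
  have hmeas : AEStronglyMeasurable (fun x : E => min (‖x‖ ^ (-α)) (‖x‖ ^ (-γ))) μ :=
    Measurable.aestronglyMeasurable (by fun_prop)
  have hnorm : ∀ x : E, ‖min (‖x‖ ^ (-α)) (‖x‖ ^ (-γ))‖ = min (‖x‖ ^ (-α)) (‖x‖ ^ (-γ)) :=
    fun x => norm_of_nonneg (by positivity)
  rw [← integrableOn_univ, ← union_compl_self (ball (0 : E) 1)]
  refine IntegrableOn.union ?_ ?_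
  · refine integrableOn_ball_of_norm_le_rpow finrank_pos hα (C := 1) (ae_of_all _ fun x => ?_) hmeas
    rw [hnorm, one_mul]
    exact min_le_left _ _
  · refine ((integrable_one_add_norm hγ).const_mul (2 ^ γ)).integrableOn.mono' hmeas.restrict ?_
    filter_upwards [ae_restrict_mem measurableSet_ball.compl] with x hx
    have hx1 : 1 ≤ ‖x‖ := by simpa using hx
    rw [hnorm]
    calc min (‖x‖ ^ (-α)) (‖x‖ ^ (-γ)) ≤ ‖x‖ ^ (-γ) := min_le_right _ _
      _ = 2 ^ γ * (2 * ‖x‖) ^ (-γ) := by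
          rw [mul_rpow zero_le_two (norm_nonneg x), ← mul_assoc, ← rpow_add two_pos]; simp
      _ ≤ 2 ^ γ * (1 + ‖x‖) ^ (-γ) := by
          have hγ0 : 0 ≤ γ := (Nat.cast_nonneg _).trans hγ.le
          gcongr 2 ^ γ * ?_
          exact rpow_le_rpow_of_nonpos (by positivity) (by linarith) (by linarith)

theorem locallyIntegrable_norm_sub_rpow_neg {β : ℝ} (hβ : β < finrank ℝ E) (z : E) :
    LocallyIntegrable (fun x : E => ‖x - z‖ ^ (-β)) μ := by
  have h : LocallyIntegrable (fun x : E => ‖x‖ ^ (-β)) μ :=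
    locallyIntegrable_of_norm_le_rpow finrank_pos hβ (C := 1)
      (ae_of_all _ fun x => by rw [one_mul, norm_of_nonneg (by positivity)])
      (Measurable.aestronglyMeasurable (by fun_prop))
  rw [← map_sub_right_eq_self μ z] at h
  exact (locallyIntegrable_map_homeomorph (Homeomorph.subRight z)).1 h

variable {V : Type*} [NormedAddCommGroup V] [NormedSpace ℝ V] [FiniteDimensional ℝ V]
  [MeasurableSpace V] [BorelSpace V] [Nontrivial V] {ν : Measure V} [ν.IsAddHaarMeasure]

theorem integrable_one_div_sq_add_sq_rpow {γ : ℝ} (hE : finrank ℝ E < γ)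
    (hEV : γ < finrank ℝ E + finrank ℝ V) {K : Set V} (hK : IsCompact K) (y : E) (z : V) :
    Integrable (fun p : E × V => 1 / (‖y - p.1‖ ^ 2 + ‖z - p.2‖ ^ 2) ^ (γ / 2))
      (μ.prod (ν.restrict K)) := by
  set dE : ℝ := (finrank ℝ E : ℝ)
  set dV : ℝ := (finrank ℝ V : ℝ)
  have hdE : 0 < dE := Nat.cast_pos.2 finrank_pos
  obtain ⟨α, hα, hαE, hαV⟩ : ∃ α : ℝ, 0 ≤ α ∧ α < dE ∧ γ - dV < α := by
    obtain ⟨α, hlo, hhi⟩ := exists_between (max_lt hdE (by linarith : γ - dV < dE))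
    exact ⟨α, (le_max_left _ _).trans hlo.le, hhi, (le_max_right _ _).trans_lt hlo⟩
  have hβ : 0 ≤ γ - α := by linarith
  have hβV : γ - α < dV := by linarith
  obtain ⟨C, hC⟩ := hK.isBounded.exists_norm_le
  set D := max 1 (‖z‖ + C)
  have hbD : ∀ tz ∈ K, ‖z - tz‖ ≤ D := fun tz htz => by
    linarith [norm_sub_le z tz, hC tz htz, le_max_right 1 (‖z‖ + C)]
  have hφ : Integrable (fun ty : E => min (‖ty - y‖ ^ (-α)) (‖ty - y‖ ^ (-γ))) μ :=
    (integrable_min_norm_rpow_neg hαE hE).comp_sub_right y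
  have hψ : Integrable (fun tz : V => ‖tz - z‖ ^ (-(γ - α))) (ν.restrict K) :=
    (locallyIntegrable_norm_sub_rpow_neg hβV z).integrableOn_isCompact hK
  refine ((hφ.mul_prod hψ).const_mul (D ^ (γ - α))).mono' (Measurable.aestronglyMeasurable
    (by fun_prop)) ?_
  have hy : ∀ᵐ p ∂μ.prod (ν.restrict K), p.1 ≠ y :=
    Measure.quasiMeasurePreserving_fst.ae (μ.ae_ne y)
  have hz : ∀ᵐ p ∂μ.prod (ν.restrict K), p.2 ≠ z ∧ p.2 ∈ K :=
    Measure.quasiMeasurePreserving_snd.ae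
      ((ae_restrict_of_ae (ν.ae_ne z)).and (ae_restrict_mem hK.measurableSet))
  filter_upwards [hy, hz] with p hpy ⟨hpz, hpK⟩
  rw [norm_of_nonneg (by positivity), norm_sub_rev p.1, norm_sub_rev p.2]
  exact one_div_sq_add_sq_rpow_le (norm_sub_pos_iff.2 hpy.symm) (norm_sub_pos_iff.2 hpz.symm)
    (hbD _ hpK) (le_max_left _ _) hα hβ (by ring)

theorem le_integral_one_div_sq_add_sq_rpow {γ : ℝ} (hE : finrank ℝ E < γ)
    (hEV : γ < finrank ℝ E + finrank ℝ V) (y : E) (z : V) :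
    μ.real (closedBall 0 1) * ν.real (closedBall 0 1) / 2 ^ (γ / 2) /
        (1 + ‖z‖) ^ (γ - finrank ℝ E) ≤
      ∫ ty, ∫ tz in closedBall (0 : V) 1, 1 / (‖y - ty‖ ^ 2 + ‖z - tz‖ ^ 2) ^ (γ / 2) ∂ν ∂μ := by
  set B := closedBall (0 : V) 1
  set M := μ.prod (ν.restrict B)
  set R := 1 + ‖z‖
  set T := closedBall y R ×ˢ B
  set F := fun p : E × V => 1 / (‖y - p.1‖ ^ 2 + ‖z - p.2‖ ^ 2) ^ (γ / 2)
  have hR : 0 < R := by positivity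
  have hγ : 0 ≤ γ := (Nat.cast_nonneg _).trans hE.le
  have hF : Integrable F M :=
    integrable_one_div_sq_add_sq_rpow hE hEV (isCompact_closedBall 0 1) y z
  have hT : MeasurableSet T := measurableSet_closedBall.prod measurableSet_closedBall
  have hMT : M.real T = R ^ finrank ℝ E * μ.real (closedBall 0 1) * ν.real B := by
    rw [measureReal_prod_prod, measureReal_restrict_apply_self,
      Measure.addHaar_real_closedBall' μ y hR.le]
  have hFT : ∀ᵐ p ∂M.restrict T, 1 / (2 * R ^ 2) ^ (γ / 2) ≤ F p := by
    have hy : ∀ᵐ p ∂M, p.1 ≠ y := Measure.quasiMeasurePreserving_fst.ae (μ.ae_ne y)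
    filter_upwards [ae_restrict_of_ae hy, ae_restrict_mem hT] with p hpy ⟨hp1, hp2⟩
    have ha : ‖y - p.1‖ ≤ R := by rw [← dist_eq_norm, dist_comm]; exact hp1
    have hb : ‖z - p.2‖ ≤ R := by
      have := mem_closedBall_zero_iff.1 hp2
      linarith [norm_sub_le z p.2]
    have hpos : 0 < ‖y - p.1‖ := norm_sub_pos_iff.2 hpy.symm
    show _ ≤ 1 / (‖y - p.1‖ ^ 2 + ‖z - p.2‖ ^ 2) ^ (γ / 2)
    gcongr
    nlinarith [norm_nonneg (z - p.2)]
  have hMT_ne_top : M T ≠ ⊤ := by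
    rw [Measure.prod_prod, Measure.restrict_apply_self]
    exact ENNReal.mul_ne_top measure_closedBall_lt_top.ne measure_closedBall_lt_top.ne
  calc μ.real (closedBall 0 1) * ν.real B / 2 ^ (γ / 2) / R ^ (γ - finrank ℝ E)
      = 1 / (2 * R ^ 2) ^ (γ / 2) * M.real T := by
        rw [hMT, rpow_sub hR, rpow_natCast, mul_rpow zero_le_two (sq_nonneg R), ← rpow_natCast R 2,
          ← rpow_mul hR.le]
        field_simp
        ring_nf
    _ = ∫ p in T, 1 / (2 * R ^ 2) ^ (γ / 2) ∂M := by rw [setIntegral_const, smul_eq_mul, mul_comm]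
    _ ≤ ∫ p in T, F p ∂M :=
        setIntegral_mono_ae_restrict (integrableOn_const hMT_ne_top) hF.integrableOn hFT
    _ ≤ ∫ p, F p ∂M := setIntegral_le_integral hF (ae_of_all _ fun p => by positivity)
    _ = _ := integral_prod F hF

end

theorem stmt_6 {n k : ℕ} (hk : 1 ≤ k) (hkn : k + 2 < n) :
    ∃ C : ℝ, 0 < C ∧ ∀ z : EuclideanSpace ℝ (Fin (n - k)), ∀ y : EuclideanSpace ℝ (Fin k),
      C / (1 + ‖z‖) ^ ((n : ℝ) - 2 - k) ≤
        ∫ ty : EuclideanSpace ℝ (Fin k),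
          ∫ tz in Metric.closedBall (0 : EuclideanSpace ℝ (Fin (n - k))) 1,
            1 / (‖y - ty‖ ^ 2 + ‖z - tz‖ ^ 2) ^ (((n : ℝ) - 2) / 2) := by
  have : Nonempty (Fin k) := ⟨⟨0, hk⟩⟩
  have : Nonempty (Fin (n - k)) := ⟨⟨0, by omega⟩⟩
  have hE : finrank ℝ (EuclideanSpace ℝ (Fin k)) = k := finrank_euclideanSpace_fin
  have hV : finrank ℝ (EuclideanSpace ℝ (Fin (n - k))) = n - k := finrank_euclideanSpace_fin
  have hkn' : (k : ℝ) + 2 < n := by exact_mod_cast hkn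
  have hball : ∀ d : ℕ, 0 < volume.real (closedBall (0 : EuclideanSpace ℝ (Fin d)) 1) := fun d =>
    ENNReal.toReal_pos (measure_closedBall_pos _ _ one_pos).ne' measure_closedBall_lt_top.ne
  refine ⟨volume.real (closedBall (0 : EuclideanSpace ℝ (Fin k)) 1) *
    volume.real (closedBall (0 : EuclideanSpace ℝ (Fin (n - k))) 1) / 2 ^ (((n : ℝ) - 2) / 2),
    div_pos (mul_pos (hball k) (hball (n - k))) (by positivity), fun z y => ?_⟩
  have h := le_integral_one_div_sq_add_sq_rpow (μ := volume) (ν := volume) (γ := (n : ℝ) - 2)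
    (by rw [hE]; linarith) (by rw [hE, hV, Nat.cast_sub (by omega)]; linarith) y z
  rwa [hE] at h
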